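/- Consider restarted Halpern PDHG with the adaptive restart condition and step-size η < 1/‖A‖₂, applied to a feasible and bounded LP whose primal-dual formulation satisfies α-metric sub-regularity (α > 0) on a region containing all iterates. Then the distance to the optimal set decays linearly across epochs: for every n ≥ 0, dist₂(z^{n+1,0}, Z*) ≤ (1/e)^{n+1} · (2e·σ_max(P)/((τ⁰+1)·α)) · dist₂(z^{0,0}, Z*), where σ_max(P) is the largest eigenvalue of P and τ⁰ is the length of the first epoch. -/

import Mathlib

open Matrix
open scoped BigOperators

noncomputable section

/-- Euclidean norm of a vector in `ℝᵏ`. -/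
def nrm {k : ℕ} (v : Fin k → ℝ) : ℝ := Real.sqrt (v ⬝ᵥ v)

/-- Euclidean norm of a primal-dual pair `z = (x, y) ∈ ℝⁿ × ℝᵐ`. -/
def nrmP {n m : ℕ} (z : (Fin n → ℝ) × (Fin m → ℝ)) : ℝ :=
  Real.sqrt (z.1 ⬝ᵥ z.1 + z.2 ⬝ᵥ z.2)

/-- Spectral norm `‖A‖₂` of a matrix: the supremum of `‖Ax‖₂` over unit vectors `x`. -/
def specNorm {n m : ℕ} (A : Matrix (Fin m) (Fin n) ℝ) : ℝ :=
  sSup {r | ∃ x : Fin n → ℝ, nrm x = 1 ∧ r = nrm (A *ᵥ x)}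

/-- Componentwise positive part `[v]⁺`. -/
def posPt {k : ℕ} (v : Fin k → ℝ) : Fin k → ℝ := fun i => max (v i) 0

/-- The Lagrangian `L(x,y) = cᵀx − yᵀAx + bᵀy` of the standard-form LP. -/
def Lag {n m : ℕ} (A : Matrix (Fin m) (Fin n) ℝ) (b : Fin m → ℝ) (c : Fin n → ℝ)
    (x : Fin n → ℝ) (y : Fin m → ℝ) : ℝ :=
  c ⬝ᵥ x - y ⬝ᵥ (A *ᵥ x) + b ⬝ᵥ y

/-- One PDHG iteration with (equal) step-size `η`:
`x⁺ = proj_{ℝ₊ⁿ}(x + ηAᵀy − ηc)`, `y⁺ = y − ηA(2x⁺ − x) + ηb`. -/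
def pdhgStep {n m : ℕ} (A : Matrix (Fin m) (Fin n) ℝ) (b : Fin m → ℝ) (c : Fin n → ℝ)
    (η : ℝ) (z : (Fin n → ℝ) × (Fin m → ℝ)) : (Fin n → ℝ) × (Fin m → ℝ) :=
  let x' := posPt (z.1 + η • (Aᵀ *ᵥ z.2) - η • c)
  (x', z.2 - η • (A *ᵥ ((2 : ℝ) • x' - z.1)) + η • b)

/-- Quadratic form `wᵀPw` of `P = [[(1/η)Iₙ, Aᵀ], [A, (1/η)Iₘ]]`. -/
def Pquad {n m : ℕ} (A : Matrix (Fin m) (Fin n) ℝ) (η : ℝ)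
    (w : (Fin n → ℝ) × (Fin m → ℝ)) : ℝ :=
  (1 / η) * (w.1 ⬝ᵥ w.1) + 2 * (w.2 ⬝ᵥ (A *ᵥ w.1)) + (1 / η) * (w.2 ⬝ᵥ w.2)

/-- The seminorm `‖w‖_P = √(wᵀPw)`. -/
def Pnorm {n m : ℕ} (A : Matrix (Fin m) (Fin n) ℝ) (η : ℝ)
    (w : (Fin n → ℝ) × (Fin m → ℝ)) : ℝ := Real.sqrt (Pquad A η w)

/-- `σ_max(P)`: the largest eigenvalue of the symmetric matrix `P`, i.e. the
supremum of the Rayleigh quotient `wᵀPw` over unit vectors `w`. -/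
def sigmaMaxP {n m : ℕ} (A : Matrix (Fin m) (Fin n) ℝ) (η : ℝ) : ℝ :=
  sSup {r | ∃ w : (Fin n → ℝ) × (Fin m → ℝ), nrmP w = 1 ∧ r = Pquad A η w}

/-- Application of the matrix `P`: `Pw = ((1/η)w₁ + Aᵀw₂, Aw₁ + (1/η)w₂)`. -/
def Papply {n m : ℕ} (A : Matrix (Fin m) (Fin n) ℝ) (η : ℝ)
    (w : (Fin n → ℝ) × (Fin m → ℝ)) : (Fin n → ℝ) × (Fin m → ℝ) :=
  ((1 / η) • w.1 + Aᵀ *ᵥ w.2, A *ᵥ w.1 + (1 / η) • w.2)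

/-- The set `Z*` of saddle points of `L` over `Z = ℝ₊ⁿ × ℝᵐ`:
`L(x*, y) ≤ L(x*, y*) ≤ L(x, y*)` for all `(x, y) ∈ Z`. -/
def saddleSet {n m : ℕ} (A : Matrix (Fin m) (Fin n) ℝ) (b : Fin m → ℝ) (c : Fin n → ℝ) :
    Set ((Fin n → ℝ) × (Fin m → ℝ)) :=
  {z | (∀ i, 0 ≤ z.1 i) ∧
    (∀ y : Fin m → ℝ, Lag A b c z.1 y ≤ Lag A b c z.1 z.2) ∧
    (∀ x : Fin n → ℝ, (∀ i, 0 ≤ x i) → Lag A b c z.1 z.2 ≤ Lag A b c x z.2)}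

/-- Euclidean distance `dist₂(z, S)` from `z` to a set `S`. -/
def dist2 {n m : ℕ} (z : (Fin n → ℝ) × (Fin m → ℝ))
    (S : Set ((Fin n → ℝ) × (Fin m → ℝ))) : ℝ :=
  sInf ((fun w => nrmP (z - w)) '' S)

/-- `P`-seminorm distance `dist_P(z, S)` from `z` to a set `S`. -/
def distP {n m : ℕ} (A : Matrix (Fin m) (Fin n) ℝ) (η : ℝ)
    (z : (Fin n → ℝ) × (Fin m → ℝ)) (S : Set ((Fin n → ℝ) × (Fin m → ℝ))) : ℝ :=
  sInf ((fun w => Pnorm A η (z - w)) '' S)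

/-- KKT error `KKT(z) = ‖(Ax − b, [Aᵀy − c]⁺, [cᵀx − bᵀy]⁺)‖₂`. -/
def KKTerr {n m : ℕ} (A : Matrix (Fin m) (Fin n) ℝ) (b : Fin m → ℝ) (c : Fin n → ℝ)
    (z : (Fin n → ℝ) × (Fin m → ℝ)) : ℝ :=
  Real.sqrt ((A *ᵥ z.1 - b) ⬝ᵥ (A *ᵥ z.1 - b)
    + posPt (Aᵀ *ᵥ z.2 - c) ⬝ᵥ posPt (Aᵀ *ᵥ z.2 - c)
    + (max (c ⬝ᵥ z.1 - b ⬝ᵥ z.2) 0) ^ 2)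

/-- Normalized duality gap `ρ_r(z) = sup_{ẑ ∈ W_r(z)} (L(x, ŷ) − L(x̂, y)) / r`,
where `W_r(z) = {ẑ ∈ Z : ‖z − ẑ‖₂ ≤ r}`. -/
def rhoGap {n m : ℕ} (A : Matrix (Fin m) (Fin n) ℝ) (b : Fin m → ℝ) (c : Fin n → ℝ)
    (r : ℝ) (z : (Fin n → ℝ) × (Fin m → ℝ)) : ℝ :=
  sSup {g | ∃ w : (Fin n → ℝ) × (Fin m → ℝ), (∀ i, 0 ≤ w.1 i) ∧ nrmP (z - w) ≤ r ∧
    g = (Lag A b c z.1 w.2 - Lag A b c w.1 z.2) / r}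

/-- The subdifferential operator
`F(z) = {(c − Aᵀy + g, Ax − b) : g ∈ N_{ℝ₊ⁿ}(x)}`, where `N_{ℝ₊ⁿ}(x)` is the
normal cone of `ℝ₊ⁿ` at `x ∈ ℝ₊ⁿ` (the set is empty if `x ∉ ℝ₊ⁿ`). -/
def Fop {n m : ℕ} (A : Matrix (Fin m) (Fin n) ℝ) (b : Fin m → ℝ) (c : Fin n → ℝ)
    (z : (Fin n → ℝ) × (Fin m → ℝ)) : Set ((Fin n → ℝ) × (Fin m → ℝ)) :=
  {w | (∀ i, 0 ≤ z.1 i) ∧ ∃ g : Fin n → ℝ,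
    (∀ u : Fin n → ℝ, (∀ i, 0 ≤ u i) → g ⬝ᵥ (u - z.1) ≤ 0) ∧
    w = (c - Aᵀ *ᵥ z.2 + g, A *ᵥ z.1 - b)}

/-- `dist₂(0, F(z)) = inf {‖w‖₂ : w ∈ F(z)}`. -/
def distF {n m : ℕ} (A : Matrix (Fin m) (Fin n) ℝ) (b : Fin m → ℝ) (c : Fin n → ℝ)
    (z : (Fin n → ℝ) × (Fin m → ℝ)) : ℝ :=
  sInf (nrmP '' Fop A b c z)

end

theorem pot_identity {V : Type*} [AddCommGroup V] [Module ℝ V] (B : V → V → ℝ)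
    (hBa : ∀ u v w, B (u + v) w = B u w + B v w)
    (hBs : ∀ (r : ℝ) (u v : V), B (r • u) v = r * B u v)
    (hBsymm : ∀ u v, B u v = B v u)
    (k : ℝ) (hk : k + 2 ≠ 0) (x0 a Ta Tb : V)
    (b : V) (hb : b = ((k + 1) / (k + 2)) • Ta + (1 / (k + 2)) • x0) :
    ((k + 1) * (k + 2) / 2) * B (b - Tb) (b - Tb) + (k + 2) * B (b - Tb) (b - x0)
      - (k * (k + 1) / 2 * B (a - Ta) (a - Ta) + (k + 1) * B (a - Ta) (a - x0))
      = ((k + 1) * (k + 2) / 2) * (B (Tb - Ta) (Tb - Ta) - B (b - a) (b - a)) := by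
  have hBar : ∀ u v w, B u (v + w) = B u v + B u w := by
    intro u v w; rw [hBsymm, hBa, hBsymm v u, hBsymm w u]
  have hBsr : ∀ (r : ℝ) (u v : V), B u (r • v) = r * B u v := by
    intro r u v; rw [hBsymm, hBs, hBsymm]
  have hBn : ∀ u v, B (-u) v = - B u v := by
    intro u v; rw [← neg_one_smul ℝ u, hBs]; ring
  have hBsub : ∀ u v w, B (u - v) w = B u w - B v w := by
    intro u v w; rw [sub_eq_add_neg, hBa, hBn]; ring
  have hBsubr : ∀ u v w, B u (v - w) = B u v - B u w := by
    intro u v w; rw [hBsymm, hBsub, hBsymm v u, hBsymm w u]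
  subst hb
  simp only [hBsub, hBsubr, hBa, hBar, hBs, hBsr]
  simp only [hBsymm Ta a, hBsymm Tb a, hBsymm Tb Ta, hBsymm x0 a, hBsymm x0 Ta, hBsymm x0 Tb]
  field_simp
  ring

theorem bilin_CS {V : Type*} [AddCommGroup V] [Module ℝ V] (B : V → V → ℝ)
    (hB0 : ∀ v, 0 ≤ B v v)
    (hBa : ∀ u v w, B (u + v) w = B u w + B v w)
    (hBs : ∀ (r : ℝ) (u v : V), B (r • u) v = r * B u v)
    (hBsymm : ∀ u v, B u v = B v u)
    (u v : V) : (B u v) ^ 2 ≤ B u u * B v v := by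
  have hBar : ∀ u v w, B u (v + w) = B u v + B u w := by
    intro u v w; rw [hBsymm, hBa, hBsymm v u, hBsymm w u]
  have hBsr : ∀ (r : ℝ) (u v : V), B u (r • v) = r * B u v := by
    intro r u v; rw [hBsymm, hBs, hBsymm]
  have hBn : ∀ u v, B (-u) v = - B u v := by
    intro u v; rw [← neg_one_smul ℝ u, hBs]; ring
  have hBsub : ∀ u v w, B (u - v) w = B u w - B v w := by
    intro u v w; rw [sub_eq_add_neg, hBa, hBn]; ring
  have hBsubr : ∀ u v w, B u (v - w) = B u v - B u w := by
    intro u v w; rw [hBsymm, hBsub, hBsymm v u, hBsymm w u]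
  rcases eq_or_lt_of_le (hB0 v) with hv | hv
  · have h1 : ∀ t : ℝ, 0 ≤ B u u - 2 * t * B u v := by
      intro t
      have := hB0 (u - t • v)
      simp only [hBsub, hBsubr, hBs, hBsr] at this
      rw [hBsymm v u, ← hv] at this
      simp only [mul_zero, sub_zero] at this
      linarith
    by_contra hcon
    push_neg at hcon
    have hne : B u v ≠ 0 := by
      intro h0; rw [h0] at hcon; nlinarith [hB0 u, hv.symm]
    have h3 := h1 ((B u u + 1) / (2 * B u v))
    have h2 : (2 : ℝ) * ((B u u + 1) / (2 * B u v)) * B u v = B u u + 1 := by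
      field_simp
    rw [h2] at h3; linarith
  · have hq := hB0 (B v v • u - B u v • v)
    simp only [hBsub, hBsubr, hBs, hBsr] at hq
    rw [hBsymm v u] at hq
    nlinarith [hq, hv]

theorem halpern_sq {V : Type*} [AddCommGroup V] [Module ℝ V] (B : V → V → ℝ)
    (hB0 : ∀ v, 0 ≤ B v v)
    (hBa : ∀ u v w, B (u + v) w = B u w + B v w)
    (hBs : ∀ (r : ℝ) (u v : V), B (r • u) v = r * B u v)
    (hBsymm : ∀ u v, B u v = B v u)
    (T : V → V)
    (hT : ∀ u v, B (T u - T v) (T u - T v) ≤ B (u - v) (u - v))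
    (x : ℕ → V)
    (hx : ∀ k : ℕ, x (k + 1) =
      (((k : ℝ) + 1) / ((k : ℝ) + 2)) • T (x k) + (1 / ((k : ℝ) + 2)) • x 0)
    (zs : V) (hzs : T zs = zs) :
    ∀ k : ℕ, ((k : ℝ) + 1) ^ 2 * B (x k - T (x k)) (x k - T (x k)) ≤
      4 * B (x 0 - zs) (x 0 - zs) := by
  have hBar : ∀ u v w, B u (v + w) = B u v + B u w := by
    intro u v w; rw [hBsymm, hBa, hBsymm v u, hBsymm w u]
  have hBsr : ∀ (r : ℝ) (u v : V), B u (r • v) = r * B u v := by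
    intro r u v; rw [hBsymm, hBs, hBsymm]
  have hBn : ∀ u v, B (-u) v = - B u v := by
    intro u v; rw [← neg_one_smul ℝ u, hBs]; ring
  have hBsub : ∀ u v w, B (u - v) w = B u w - B v w := by
    intro u v w; rw [sub_eq_add_neg, hBa, hBn]; ring
  have hBsubr : ∀ u v w, B u (v - w) = B u v - B u w := by
    intro u v w; rw [hBsymm, hBsub, hBsymm v u, hBsymm w u]
  set φ : ℕ → ℝ := fun k =>
    (k : ℝ) * ((k : ℝ) + 1) / 2 * B (x k - T (x k)) (x k - T (x k))
      + ((k : ℝ) + 1) * B (x k - T (x k)) (x k - x 0) with hφ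
  have hpot : ∀ k, φ (k + 1) ≤ φ k := by
    intro k
    have ht : ((k : ℝ) + 2) ≠ 0 := by positivity
    have key := pot_identity B hBa hBs hBsymm (k : ℝ) ht (x 0) (x k) (T (x k))
      (T (x (k + 1))) (x (k + 1)) (hx k)
    have hne := hT (x (k + 1)) (x k)
    have hc : (0 : ℝ) ≤ ((k : ℝ) + 1) * ((k : ℝ) + 2) / 2 := by positivity
    have h2 : ((k : ℝ) + 1) * ((k : ℝ) + 2) / 2 *
        (B (T (x (k + 1)) - T (x k)) (T (x (k + 1)) - T (x k))
          - B (x (k + 1) - x k) (x (k + 1) - x k)) ≤ 0 :=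
      mul_nonpos_of_nonneg_of_nonpos hc (by linarith)
    have hφk1 : φ (k + 1) = ((k : ℝ) + 1) * ((k : ℝ) + 2) / 2 *
        B (x (k + 1) - T (x (k + 1))) (x (k + 1) - T (x (k + 1)))
        + ((k : ℝ) + 2) * B (x (k + 1) - T (x (k + 1))) (x (k + 1) - x 0) := by
      simp only [hφ]; push_cast; ring
    rw [hφk1, hφ]
    linarith [key, h2]
  have hBz : ∀ u : V, B u 0 = 0 := by
    intro u; rw [← zero_smul ℝ (0 : V), hBsr]; ring
  have hφ0 : φ 0 = 0 := by
    simp only [hφ]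
    simp [sub_self, hBz]
  have hφle : ∀ k, φ k ≤ 0 := by
    intro k
    induction k with
    | zero => exact le_of_eq hφ0
    | succ k ih => exact le_trans (hpot k) ih
  intro k
  obtain ⟨e, he⟩ : ∃ e, e = x k - T (x k) := ⟨_, rfl⟩
  obtain ⟨d, hd⟩ : ∃ d, d = x k - zs := ⟨_, rfl⟩
  obtain ⟨r, hr⟩ : ∃ r, r = x 0 - zs := ⟨_, rfl⟩
  rw [← he, ← hr]
  -- from fixed point nonexpansiveness: B e e ≤ 2 B e d
  have h1 : B e e ≤ 2 * B e d := by
    have h0 := hT (x k) zs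
    rw [hzs] at h0
    have hdd : T (x k) - zs = d - e := by rw [hd, he]; abel
    rw [hdd, ← hd] at h0
    simp only [hBsub, hBsubr] at h0
    have hsy := hBsymm d e
    linarith
  have h2 : (k : ℝ) * ((k : ℝ) + 1) / 2 * B e e + ((k : ℝ) + 1) * (B e d - B e r) ≤ 0 := by
    have h := hφle k
    simp only [hφ] at h
    have hxk : x k - x 0 = d - r := by rw [hd, hr]; abel
    rw [hxk, ← he, hBsubr] at h
    linarith
  have h3 : ((k : ℝ) + 1) ^ 2 / 2 * B e e ≤ ((k : ℝ) + 1) * B e r := by nlinarith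
  have hCS := bilin_CS B hB0 hBa hBs hBsymm e r
  have hk1 : (0 : ℝ) < (k : ℝ) + 1 := by positivity
  rcases eq_or_lt_of_le (hB0 e) with he0 | he0
  · rw [← he0]
    nlinarith [hB0 r]
  · nlinarith [hB0 r, hB0 e, sq_nonneg (((k : ℝ) + 1) * B e e - 2 * B e r)]
section Basic
open Matrix
variable {k : ℕ}

lemma dot_self_nonneg (v : Fin k → ℝ) : 0 ≤ v ⬝ᵥ v :=
  Finset.sum_nonneg fun i _ => mul_self_nonneg _

lemma nrm_nonneg (v : Fin k → ℝ) : 0 ≤ nrm v := Real.sqrt_nonneg _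

lemma nrm_sq (v : Fin k → ℝ) : nrm v ^ 2 = v ⬝ᵥ v := Real.sq_sqrt (dot_self_nonneg v)

lemma dot_CS (u v : Fin k → ℝ) : (u ⬝ᵥ v) ^ 2 ≤ (u ⬝ᵥ u) * (v ⬝ᵥ v) := by
  have h := Finset.sum_mul_sq_le_sq_mul_sq Finset.univ u v
  simpa [dotProduct, pow_two] using h

lemma dot_le_nrm (u v : Fin k → ℝ) : u ⬝ᵥ v ≤ nrm u * nrm v := by
  have h := dot_CS u v
  have h2 : (u ⬝ᵥ v) ^ 2 ≤ (nrm u * nrm v) ^ 2 := by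
    rw [mul_pow, nrm_sq, nrm_sq]; exact h
  have h3 : 0 ≤ nrm u * nrm v := mul_nonneg (nrm_nonneg u) (nrm_nonneg v)
  nlinarith [abs_nonneg (u ⬝ᵥ v), sq_abs (u ⬝ᵥ v), le_abs_self (u ⬝ᵥ v)]

lemma nrm_smul (r : ℝ) (v : Fin k → ℝ) : nrm (r • v) = |r| * nrm v := by
  unfold nrm
  rw [smul_dotProduct, dotProduct_smul, smul_eq_mul, smul_eq_mul, ← mul_assoc,
    Real.sqrt_mul (mul_self_nonneg r), Real.sqrt_mul_self_eq_abs]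

lemma nrm_pos {v : Fin k → ℝ} (hv : v ≠ 0) : 0 < nrm v := by
  have h : ∃ i, v i ≠ 0 := by
    by_contra h; push_neg at h; exact hv (funext h)
  obtain ⟨i, hi⟩ := h
  have hsum := Finset.single_le_sum (f := fun j => v j * v j)
    (fun j _ => mul_self_nonneg _) (Finset.mem_univ i)
  exact Real.sqrt_pos.mpr (lt_of_lt_of_le (mul_self_pos.mpr hi) hsum)

lemma nrm_eq_one_iff {v : Fin k → ℝ} : nrm v = 1 ↔ v ⬝ᵥ v = 1 := by
  unfold nrm
  constructor
  · intro h
    have := congrArg (· ^ 2) h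
    simpa [Real.sq_sqrt (dot_self_nonneg v)] using this
  · intro h; rw [h, Real.sqrt_one]

end Basic
section Spec
open Matrix
variable {n m : ℕ} (A : Matrix (Fin m) (Fin n) ℝ)

lemma spec_bddAbove : BddAbove {r | ∃ x : Fin n → ℝ, nrm x = 1 ∧ r = nrm (A *ᵥ x)} := by
  refine ⟨Real.sqrt (∑ i, (A i) ⬝ᵥ (A i)), ?_⟩
  rintro r ⟨x, hx, rfl⟩
  have hx1 : x ⬝ᵥ x = 1 := nrm_eq_one_iff.mp hx
  have hb : (A *ᵥ x) ⬝ᵥ (A *ᵥ x) ≤ ∑ i, (A i) ⬝ᵥ (A i) := by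
    have h1 : ∀ i : Fin m, (A *ᵥ x) i * (A *ᵥ x) i ≤ (A i) ⬝ᵥ (A i) := by
      intro i
      have := dot_CS (A i) x
      rw [hx1, mul_one] at this
      simpa [Matrix.mulVec, pow_two] using this
    calc (A *ᵥ x) ⬝ᵥ (A *ᵥ x) = ∑ i, (A *ᵥ x) i * (A *ᵥ x) i := rfl
    _ ≤ ∑ i, (A i) ⬝ᵥ (A i) := Finset.sum_le_sum fun i _ => h1 i
  exact Real.sqrt_le_sqrt hb

lemma spec_pos {η : ℝ} (hη0 : 0 < η) (hη : η < 1 / specNorm A) : 0 < specNorm A := by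
  by_contra h
  push_neg at h
  have : 1 / specNorm A ≤ 0 := one_div_nonpos.mpr h
  linarith

lemma nrm_mulVec_le {η : ℝ} (hη0 : 0 < η) (hη : η < 1 / specNorm A) (x : Fin n → ℝ) :
    nrm (A *ᵥ x) ≤ specNorm A * nrm x := by
  rcases eq_or_ne x 0 with rfl | hx
  · simp [nrm]
  · have hpos := nrm_pos hx
    set r := (nrm x)⁻¹ with hr
    have hru : nrm (r • x) = 1 := by
      rw [nrm_smul, abs_of_pos (by positivity), hr, inv_mul_cancel₀ hpos.ne']
    have hmem : nrm (A *ᵥ (r • x)) ∈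
        {s | ∃ u : Fin n → ℝ, nrm u = 1 ∧ s = nrm (A *ᵥ u)} := ⟨r • x, hru, rfl⟩
    have hle : nrm (A *ᵥ (r • x)) ≤ specNorm A := le_csSup (spec_bddAbove A) hmem
    rw [Matrix.mulVec_smul, nrm_smul, abs_of_pos (by positivity)] at hle
    rw [hr] at hle
    calc nrm (A *ᵥ x) = nrm x * ((nrm x)⁻¹ * nrm (A *ᵥ x)) := by
          field_simp
    _ ≤ nrm x * specNorm A := by
          apply mul_le_mul_of_nonneg_left hle hpos.le
    _ = specNorm A * nrm x := mul_comm _ _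

lemma dot_mulVec_le {η : ℝ} (hη0 : 0 < η) (hη : η < 1 / specNorm A)
    (x : Fin n → ℝ) (y : Fin m → ℝ) :
    y ⬝ᵥ (A *ᵥ x) ≤ specNorm A * nrm x * nrm y := by
  calc y ⬝ᵥ (A *ᵥ x) ≤ nrm y * nrm (A *ᵥ x) := dot_le_nrm y (A *ᵥ x)
  _ ≤ nrm y * (specNorm A * nrm x) :=
      mul_le_mul_of_nonneg_left (nrm_mulVec_le A hη0 hη x) (nrm_nonneg y)
  _ = specNorm A * nrm x * nrm y := by ring

lemma spec_lt_inv_eta {η : ℝ} (hη0 : 0 < η) (hη : η < 1 / specNorm A) :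
    specNorm A < 1 / η := by
  have hS := spec_pos A hη0 hη
  rw [lt_div_iff₀ hS] at hη
  rw [lt_div_iff₀ hη0]
  linarith [hη]

end Spec
section Pin
open Matrix
variable {n m : ℕ}

/-- The bilinear form associated with `P`. -/
noncomputable def pin (A : Matrix (Fin m) (Fin n) ℝ) (η : ℝ)
    (u v : (Fin n → ℝ) × (Fin m → ℝ)) : ℝ :=
  (1 / η) * (u.1 ⬝ᵥ v.1) + (1 / η) * (u.2 ⬝ᵥ v.2) + u.2 ⬝ᵥ (A *ᵥ v.1) + v.2 ⬝ᵥ (A *ᵥ u.1)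

variable (A : Matrix (Fin m) (Fin n) ℝ) (η : ℝ)

lemma pin_self (w : (Fin n → ℝ) × (Fin m → ℝ)) : pin A η w w = Pquad A η w := by
  unfold pin Pquad; ring

lemma pin_comm (u v : (Fin n → ℝ) × (Fin m → ℝ)) : pin A η u v = pin A η v u := by
  unfold pin
  rw [dotProduct_comm u.1 v.1, dotProduct_comm u.2 v.2]; ring

lemma pin_add_left (u v w : (Fin n → ℝ) × (Fin m → ℝ)) :
    pin A η (u + v) w = pin A η u w + pin A η v w := by
  unfold pin
  simp only [Prod.fst_add, Prod.snd_add, add_dotProduct, dotProduct_add, Matrix.mulVec_add]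
  ring

lemma pin_smul_left (r : ℝ) (u v : (Fin n → ℝ) × (Fin m → ℝ)) :
    pin A η (r • u) v = r * pin A η u v := by
  unfold pin
  simp only [Prod.smul_fst, Prod.smul_snd, smul_dotProduct, dotProduct_smul,
    Matrix.mulVec_smul, smul_eq_mul]
  ring

lemma pin_nonneg (hη0 : 0 < η) (hη : η < 1 / specNorm A)
    (w : (Fin n → ℝ) × (Fin m → ℝ)) : 0 ≤ pin A η w w := by
  have hS := spec_pos A hη0 hη
  have hSlt := spec_lt_inv_eta A hη0 hη
  have h1 : (-w.2) ⬝ᵥ (A *ᵥ w.1) ≤ specNorm A * nrm w.1 * nrm w.2 := by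
    have := dot_mulVec_le A hη0 hη w.1 (-w.2)
    have hneg : nrm (-w.2) = nrm w.2 := by
      rw [show -w.2 = (-1 : ℝ) • w.2 by module, nrm_smul]; simp
    rwa [hneg] at this
  have h2 : nrm w.1 ^ 2 = w.1 ⬝ᵥ w.1 := nrm_sq w.1
  have h3 : nrm w.2 ^ 2 = w.2 ⬝ᵥ w.2 := nrm_sq w.2
  have h4 : (-w.2) ⬝ᵥ (A *ᵥ w.1) = -(w.2 ⬝ᵥ (A *ᵥ w.1)) := by
    rw [neg_dotProduct]
  rw [h4] at h1
  unfold pin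
  nlinarith [nrm_nonneg w.1, nrm_nonneg w.2, sq_nonneg (nrm w.1 - nrm w.2),
    mul_nonneg (nrm_nonneg w.1) (nrm_nonneg w.2)]

lemma Pquad_nonneg (hη0 : 0 < η) (hη : η < 1 / specNorm A)
    (w : (Fin n → ℝ) × (Fin m → ℝ)) : 0 ≤ Pquad A η w := by
  rw [← pin_self]; exact pin_nonneg A η hη0 hη w

lemma pin_eq_dot2 (u v : (Fin n → ℝ) × (Fin m → ℝ)) :
    pin A η u v = (Papply A η u).1 ⬝ᵥ v.1 + (Papply A η u).2 ⬝ᵥ v.2 := by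
  unfold pin Papply
  simp only [add_dotProduct, smul_dotProduct, smul_eq_mul]
  rw [Matrix.mulVec_transpose, ← Matrix.dotProduct_mulVec, dotProduct_comm (A *ᵥ u.1) v.2]
  ring

end Pin
section Resolvent
open Matrix
variable {n m : ℕ} (A : Matrix (Fin m) (Fin n) ℝ) (b : Fin m → ℝ) (c : Fin n → ℝ) (η : ℝ)

lemma pdhg_resolvent (hη0 : 0 < η) (zz : (Fin n → ℝ) × (Fin m → ℝ)) :
    Papply A η (zz - pdhgStep A b c η zz) ∈ Fop A b c (pdhgStep A b c η zz) := by
  set v : Fin n → ℝ := zz.1 + η • (Aᵀ *ᵥ zz.2) - η • c with hv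
  set xp : Fin n → ℝ := posPt v with hxp
  have hstep1 : (pdhgStep A b c η zz).1 = xp := rfl
  have hstep2 : (pdhgStep A b c η zz).2
      = zz.2 - η • (A *ᵥ ((2 : ℝ) • xp - zz.1)) + η • b := rfl
  refine ⟨?_, (1 / η) • (v - xp), ?_, ?_⟩
  · intro i
    rw [hstep1]
    exact le_max_right _ _
  · intro u hu
    rw [hstep1]
    apply Finset.sum_nonpos
    intro i _
    rcases le_or_gt 0 (v i) with hvi | hvi
    · have : xp i = v i := by rw [hxp]; simp [posPt, hvi, max_eq_left]
      simp [Pi.smul_apply, Pi.sub_apply, this]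
    · have hxpi : xp i = 0 := by rw [hxp]; simp [posPt, le_of_lt hvi, max_eq_right]
      have hg : (1 / η) * (v i - xp i) ≤ 0 := by
        rw [hxpi, sub_zero]
        exact mul_nonpos_of_nonneg_of_nonpos (by positivity) hvi.le
      have hun : 0 ≤ u i - xp i := by rw [hxpi, sub_zero]; exact hu i
      exact mul_nonpos_of_nonpos_of_nonneg (by simpa using hg) hun
  · apply Prod.ext
    · show (Papply A η (zz - pdhgStep A b c η zz)).1 = _
      unfold Papply
      simp only
      funext i
      simp only [Prod.fst_sub, Prod.snd_sub, hstep1, hstep2, Matrix.mulVec_sub,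
        Matrix.mulVec_add, Matrix.mulVec_smul, Pi.add_apply, Pi.sub_apply,
        Pi.smul_apply, smul_eq_mul, hv]
      field_simp
      ring
    · show (Papply A η (zz - pdhgStep A b c η zz)).2 = _
      unfold Papply
      simp only
      funext i
      simp only [Prod.fst_sub, Prod.snd_sub, hstep1, hstep2, Matrix.mulVec_sub,
        Matrix.mulVec_add, Matrix.mulVec_smul, Pi.add_apply, Pi.sub_apply,
        Pi.smul_apply, smul_eq_mul]
      field_simp
      ring
end Resolvent
section Mono
open Matrix
variable {n m : ℕ} (A : Matrix (Fin m) (Fin n) ℝ) (b : Fin m → ℝ) (c : Fin n → ℝ) (η : ℝ)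

lemma Fop_monotone {z₁ z₂ u₁ u₂ : (Fin n → ℝ) × (Fin m → ℝ)}
    (h1 : u₁ ∈ Fop A b c z₁) (h2 : u₂ ∈ Fop A b c z₂) :
    0 ≤ (u₁.1 - u₂.1) ⬝ᵥ (z₁.1 - z₂.1) + (u₁.2 - u₂.2) ⬝ᵥ (z₁.2 - z₂.2) := by
  obtain ⟨hz1, g₁, hg₁, he₁⟩ := h1
  obtain ⟨hz2, g₂, hg₂, he₂⟩ := h2
  have key : ∀ (y : Fin m → ℝ) (x : Fin n → ℝ), (Aᵀ *ᵥ y) ⬝ᵥ x = y ⬝ᵥ (A *ᵥ x) := by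
    intro y x; rw [Matrix.mulVec_transpose, ← Matrix.dotProduct_mulVec]
  have e₁ : g₁ ⬝ᵥ z₂.1 - g₁ ⬝ᵥ z₁.1 ≤ 0 := by
    have := hg₁ z₂.1 hz2; rwa [dotProduct_sub] at this
  have e₂ : g₂ ⬝ᵥ z₁.1 - g₂ ⬝ᵥ z₂.1 ≤ 0 := by
    have := hg₂ z₁.1 hz1; rwa [dotProduct_sub] at this
  rw [he₁, he₂]
  simp only [sub_dotProduct, add_dotProduct, dotProduct_sub, dotProduct_add]
  rw [key z₁.2 z₁.1, key z₁.2 z₂.1, key z₂.2 z₁.1, key z₂.2 z₂.1,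
    dotProduct_comm (A *ᵥ z₁.1) z₁.2, dotProduct_comm (A *ᵥ z₁.1) z₂.2,
    dotProduct_comm (A *ᵥ z₂.1) z₁.2, dotProduct_comm (A *ᵥ z₂.1) z₂.2]
  linarith

lemma papply_sub (u v : (Fin n → ℝ) × (Fin m → ℝ)) :
    Papply A η (u - v) = Papply A η u - Papply A η v := by
  apply Prod.ext <;>
  · simp only [Papply, Prod.fst_sub, Prod.snd_sub, Matrix.mulVec_sub, smul_sub]
    abel

lemma pin_sub_left (u v w : (Fin n → ℝ) × (Fin m → ℝ)) :
    pin A η (u - v) w = pin A η u w - pin A η v w := by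
  rw [sub_eq_add_neg, pin_add_left, show -v = (-1 : ℝ) • v by module, pin_smul_left]
  ring

lemma pdhg_firm (hη0 : 0 < η) (z w : (Fin n → ℝ) × (Fin m → ℝ)) :
    pin A η (pdhgStep A b c η z - pdhgStep A b c η w) (pdhgStep A b c η z - pdhgStep A b c η w)
      ≤ pin A η (z - w) (pdhgStep A b c η z - pdhgStep A b c η w) := by
  set Tz := pdhgStep A b c η z
  set Tw := pdhgStep A b c η w
  have h1 := pdhg_resolvent A b c η hη0 z
  have h2 := pdhg_resolvent A b c η hη0 w
  have hm := Fop_monotone A b c h1 h2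
  have hmm : 0 ≤ pin A η ((z - w) - (Tz - Tw)) (Tz - Tw) := by
    rw [pin_eq_dot2]
    have he : Papply A η ((z - w) - (Tz - Tw)) =
        Papply A η (z - Tz) - Papply A η (w - Tw) := by
      rw [← papply_sub]; congr 1; abel
    rw [he]
    simpa [Prod.fst_sub, Prod.snd_sub] using hm
  rw [pin_sub_left] at hmm
  linarith

lemma pdhg_nonexpansive_sq (hη0 : 0 < η) (hη : η < 1 / specNorm A)
    (z w : (Fin n → ℝ) × (Fin m → ℝ)) :
    Pquad A η (pdhgStep A b c η z - pdhgStep A b c η w) ≤ Pquad A η (z - w) := by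
  set Tz := pdhgStep A b c η z
  set Tw := pdhgStep A b c η w
  have hfirm := pdhg_firm A b c η hη0 z w
  have hCS := bilin_CS (pin A η) (pin_nonneg A η hη0 hη) (pin_add_left A η)
    (pin_smul_left A η) (pin_comm A η) (z - w) (Tz - Tw)
  have h0 := pin_nonneg A η hη0 hη (Tz - Tw)
  have h0' := pin_nonneg A η hη0 hη (z - w)
  rw [← pin_self, ← pin_self]
  rcases eq_or_lt_of_le h0 with hq | hq
  · linarith
  · nlinarith

lemma pdhg_nonexpansive (hη0 : 0 < η) (hη : η < 1 / specNorm A)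
    (z w : (Fin n → ℝ) × (Fin m → ℝ)) :
    Pnorm A η (pdhgStep A b c η z - pdhgStep A b c η w) ≤ Pnorm A η (z - w) :=
  Real.sqrt_le_sqrt (pdhg_nonexpansive_sq A b c η hη0 hη z w)

end Mono
section Saddle
open Matrix
variable {n m : ℕ} (A : Matrix (Fin m) (Fin n) ℝ) (b : Fin m → ℝ) (c : Fin n → ℝ) (η : ℝ)

lemma dot_self_eq_zero' {k : ℕ} {v : Fin k → ℝ} (h : v ⬝ᵥ v = 0) : v = 0 := by
  by_contra hne
  exact absurd h (ne_of_gt (Real.sqrt_pos.mp (nrm_pos hne)))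

lemma saddle_KKT {zs : (Fin n → ℝ) × (Fin m → ℝ)} (hzs : zs ∈ saddleSet A b c) :
    A *ᵥ zs.1 = b ∧ (∀ i, 0 ≤ (c - Aᵀ *ᵥ zs.2) i) ∧
      (∀ i, (c - Aᵀ *ᵥ zs.2) i * zs.1 i = 0) := by
  obtain ⟨hpos, hy, hx⟩ := hzs
  have key : ∀ (y : Fin m → ℝ) (x : Fin n → ℝ), (Aᵀ *ᵥ y) ⬝ᵥ x = y ⬝ᵥ (A *ᵥ x) := by
    intro y x; rw [Matrix.mulVec_transpose, ← Matrix.dotProduct_mulVec]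
  set d : Fin m → ℝ := b - A *ᵥ zs.1 with hdd
  have hfeas : A *ᵥ zs.1 = b := by
    have h2 := hy (zs.2 + d)
    unfold Lag at h2
    simp only [add_dotProduct, dotProduct_add] at h2
    have h3 : d ⬝ᵥ d ≤ 0 := by
      have hd2 : d ⬝ᵥ d = d ⬝ᵥ b - d ⬝ᵥ (A *ᵥ zs.1) := by
        rw [hdd, dotProduct_sub]
      rw [dotProduct_comm d b] at hd2
      linarith
    have h5 : d ⬝ᵥ d = 0 := le_antisymm h3 (dot_self_nonneg d)
    have h6 := dot_self_eq_zero' h5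
    rw [hdd, sub_eq_zero] at h6
    exact h6.symm
  set s : Fin n → ℝ := c - Aᵀ *ᵥ zs.2 with hss
  have hsx : ∀ x : Fin n → ℝ, (∀ i, 0 ≤ x i) → s ⬝ᵥ zs.1 ≤ s ⬝ᵥ x := by
    intro x hxpos
    have h2 := hx x hxpos
    unfold Lag at h2
    rw [← key zs.2 zs.1, ← key zs.2 x] at h2
    rw [hss]
    simp only [sub_dotProduct]
    linarith
  have hsnn : ∀ i, 0 ≤ s i := by
    intro i
    have h2 := hsx (zs.1 + Pi.single i 1) (by
      intro j
      rcases eq_or_ne j i with rfl | hji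
      · simp [Pi.single_apply]; linarith [hpos j]
      · simp [Pi.single_apply, hji]; exact hpos j)
    rw [dotProduct_add, dotProduct_single] at h2
    linarith
  have hzero : s ⬝ᵥ zs.1 = 0 := by
    have h2 := hsx 0 (fun i => le_refl 0)
    rw [dotProduct_zero] at h2
    have h3 : 0 ≤ s ⬝ᵥ zs.1 :=
      Finset.sum_nonneg fun i _ => mul_nonneg (hsnn i) (hpos i)
    linarith
  refine ⟨hfeas, hsnn, ?_⟩
  have := (Finset.sum_eq_zero_iff_of_nonneg
    (fun i (_ : i ∈ Finset.univ) => mul_nonneg (hsnn i) (hpos i))).mp hzero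
  intro i
  exact this i (Finset.mem_univ i)

lemma saddle_fixed (hη0 : 0 < η) {zs : (Fin n → ℝ) × (Fin m → ℝ)}
    (hzs : zs ∈ saddleSet A b c) : pdhgStep A b c η zs = zs := by
  obtain ⟨hfeas, hsnn, hcomp⟩ := saddle_KKT A b c hzs
  have hpos := hzs.1
  set s : Fin n → ℝ := c - Aᵀ *ᵥ zs.2 with hss
  have hx : (pdhgStep A b c η zs).1 = zs.1 := by
    funext i
    show posPt (zs.1 + η • (Aᵀ *ᵥ zs.2) - η • c) i = zs.1 i
    have hv : (zs.1 + η • (Aᵀ *ᵥ zs.2) - η • c) i = zs.1 i - η * s i := by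
      simp only [Pi.add_apply, Pi.sub_apply, Pi.smul_apply, smul_eq_mul, hss]
      ring
    unfold posPt
    rw [hv]
    rcases mul_eq_zero.mp (hcomp i) with hs0 | hx0
    · rw [show s i = 0 from hs0, mul_zero, sub_zero]
      exact max_eq_left (hpos i)
    · rw [hx0]
      simp only [zero_sub]
      rw [max_eq_right]
      simp only [Left.neg_nonpos_iff]
      exact mul_nonneg hη0.le (hsnn i)
  have hy : (pdhgStep A b c η zs).2 = zs.2 := by
    show zs.2 - η • (A *ᵥ ((2 : ℝ) • (pdhgStep A b c η zs).1 - zs.1)) + η • b = zs.2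
    rw [hx, show (2 : ℝ) • zs.1 - zs.1 = zs.1 by module, hfeas]
    abel
  exact Prod.ext hx hy

end Saddle
section Sigma
open Matrix
variable {n m : ℕ} (A : Matrix (Fin m) (Fin n) ℝ) (η : ℝ)

lemma nrmP_eq_one_iff {w : (Fin n → ℝ) × (Fin m → ℝ)} :
    nrmP w = 1 ↔ w.1 ⬝ᵥ w.1 + w.2 ⬝ᵥ w.2 = 1 := by
  unfold nrmP
  constructor
  · intro h
    have := congrArg (· ^ 2) h
    simpa [Real.sq_sqrt (add_nonneg (dot_self_nonneg w.1) (dot_self_nonneg w.2))] using this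
  · intro h; rw [h, Real.sqrt_one]

lemma nrmP_nonneg (w : (Fin n → ℝ) × (Fin m → ℝ)) : 0 ≤ nrmP w := Real.sqrt_nonneg _

lemma nrmP_smul (r : ℝ) (w : (Fin n → ℝ) × (Fin m → ℝ)) : nrmP (r • w) = |r| * nrmP w := by
  unfold nrmP
  simp only [Prod.smul_fst, Prod.smul_snd, smul_dotProduct, dotProduct_smul, smul_eq_mul]
  rw [show r * (r * (w.1 ⬝ᵥ w.1)) + r * (r * (w.2 ⬝ᵥ w.2))
    = (r * r) * (w.1 ⬝ᵥ w.1 + w.2 ⬝ᵥ w.2) by ring,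
    Real.sqrt_mul (mul_self_nonneg r), Real.sqrt_mul_self_eq_abs]

lemma Pquad_smul (r : ℝ) (w : (Fin n → ℝ) × (Fin m → ℝ)) :
    Pquad A η (r • w) = r ^ 2 * Pquad A η w := by
  rw [← pin_self, pin_smul_left, pin_comm, pin_smul_left, pin_comm, pin_self]
  ring

variable (hη0 : 0 < η) (hη : η < 1 / specNorm A)
include hη0 hη

lemma sigma_bddAbove :
    BddAbove {r | ∃ w : (Fin n → ℝ) × (Fin m → ℝ), nrmP w = 1 ∧ r = Pquad A η w} := by
  refine ⟨1 / η + specNorm A, ?_⟩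
  rintro r ⟨w, hw, rfl⟩
  have h1 : w.1 ⬝ᵥ w.1 + w.2 ⬝ᵥ w.2 = 1 := nrmP_eq_one_iff.mp hw
  have h2 : w.2 ⬝ᵥ (A *ᵥ w.1) ≤ specNorm A * nrm w.1 * nrm w.2 :=
    dot_mulVec_le A hη0 hη w.1 w.2
  have h3 := nrm_sq w.1
  have h4 := nrm_sq w.2
  have hS := (spec_pos A hη0 hη).le
  unfold Pquad
  have h5 : (1 : ℝ) / η * (w.1 ⬝ᵥ w.1) + 1 / η * (w.2 ⬝ᵥ w.2) = 1 / η := by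
    rw [← mul_add, h1, mul_one]
  have h6 : 2 * (w.2 ⬝ᵥ (A *ᵥ w.1)) ≤ specNorm A := by
    nlinarith [sq_nonneg (nrm w.1 - nrm w.2), nrm_nonneg w.1, nrm_nonneg w.2,
      mul_nonneg (nrm_nonneg w.1) (nrm_nonneg w.2)]
  linarith

lemma sigma_ge {w : (Fin n → ℝ) × (Fin m → ℝ)} (hw : nrmP w = 1) :
    Pquad A η w ≤ sigmaMaxP A η :=
  le_csSup (sigma_bddAbove A η hη0 hη) ⟨w, hw, rfl⟩

lemma exists_unit : ∃ x : Fin n → ℝ, nrm x = 1 := by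
  have hS := spec_pos A hη0 hη
  by_contra h
  push_neg at h
  have : {r | ∃ x : Fin n → ℝ, nrm x = 1 ∧ r = nrm (A *ᵥ x)} = ∅ := by
    ext r; simp only [Set.mem_setOf_eq, Set.mem_empty_iff_false, iff_false]
    rintro ⟨x, hx, -⟩; exact h x hx
  rw [specNorm, this, Real.sSup_empty] at hS
  exact lt_irrefl 0 hS

lemma sigma_pos : 0 < sigmaMaxP A η := by
  obtain ⟨x, hx⟩ := exists_unit A η hη0 hη
  have hx1 : x ⬝ᵥ x = 1 := nrm_eq_one_iff.mp hx
  have hmem : nrmP ((x, (0 : Fin m → ℝ))) = 1 := by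
    rw [nrmP_eq_one_iff]; simp [hx1]
  have hq : Pquad A η ((x, (0 : Fin m → ℝ))) = 1 / η := by
    unfold Pquad; simp [hx1]
  have := sigma_ge A η hη0 hη hmem
  rw [hq] at this
  have : 0 < 1 / η := by positivity
  linarith [sigma_ge A η hη0 hη hmem, hq ▸ sigma_ge A η hη0 hη hmem]

lemma rayleigh (w : (Fin n → ℝ) × (Fin m → ℝ)) :
    Pquad A η w ≤ sigmaMaxP A η * (w.1 ⬝ᵥ w.1 + w.2 ⬝ᵥ w.2) := by
  set s := w.1 ⬝ᵥ w.1 + w.2 ⬝ᵥ w.2 with hs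
  have hs0 : 0 ≤ s := add_nonneg (dot_self_nonneg w.1) (dot_self_nonneg w.2)
  rcases eq_or_lt_of_le hs0 with hz | hz
  · have e1 : w.1 = 0 := dot_self_eq_zero'
      (by nlinarith [dot_self_nonneg w.1, dot_self_nonneg w.2])
    have e2 : w.2 = 0 := dot_self_eq_zero'
      (by nlinarith [dot_self_nonneg w.1, dot_self_nonneg w.2])
    have hq : Pquad A η w = 0 := by unfold Pquad; rw [e1, e2]; simp
    rw [hq, ← hz]
    simp
  · have hru : nrmP ((Real.sqrt s)⁻¹ • w) = 1 := by
      rw [nrmP_smul, abs_of_pos (by positivity)]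
      have : nrmP w = Real.sqrt s := rfl
      rw [this, inv_mul_cancel₀ (by positivity)]
    have hle := sigma_ge A η hη0 hη hru
    rw [Pquad_smul] at hle
    have hsq : ((Real.sqrt s)⁻¹) ^ 2 = s⁻¹ := by
      rw [← Real.sqrt_inv, Real.sq_sqrt (by positivity)]
    rw [hsq] at hle
    calc Pquad A η w = s * (s⁻¹ * Pquad A η w) := by field_simp
    _ ≤ s * sigmaMaxP A η := mul_le_mul_of_nonneg_left hle hs0
    _ = sigmaMaxP A η * s := mul_comm _ _

lemma Pnorm_le_sigma (w : (Fin n → ℝ) × (Fin m → ℝ)) :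
    Pnorm A η w ≤ Real.sqrt (sigmaMaxP A η) * nrmP w := by
  unfold Pnorm nrmP
  rw [← Real.sqrt_mul (sigma_pos A η hη0 hη).le]
  exact Real.sqrt_le_sqrt (rayleigh A η hη0 hη w)

lemma papply_le (u : (Fin n → ℝ) × (Fin m → ℝ)) :
    nrmP (Papply A η u) ≤ Real.sqrt (sigmaMaxP A η) * Pnorm A η u := by
  set p := Papply A η u with hp
  set D := p.1 ⬝ᵥ p.1 + p.2 ⬝ᵥ p.2 with hD
  have hD0 : 0 ≤ D := add_nonneg (dot_self_nonneg p.1) (dot_self_nonneg p.2)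
  have hQ0 := Pquad_nonneg A η hη0 hη u
  have hσ := (sigma_pos A η hη0 hη)
  have hCS := bilin_CS (pin A η) (pin_nonneg A η hη0 hη) (pin_add_left A η)
    (pin_smul_left A η) (pin_comm A η) u p
  rw [pin_self, pin_self] at hCS
  have hpe : pin A η u p = D := by rw [pin_eq_dot2, ← hp, hD]
  have hr : Pquad A η p ≤ sigmaMaxP A η * D := rayleigh A η hη0 hη p
  have hcore : D ≤ sigmaMaxP A η * Pquad A η u := by
    rcases eq_or_lt_of_le hD0 with h0 | h0
    · rw [← h0]; positivity
    · have hQp0 := Pquad_nonneg A η hη0 hη p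
      nlinarith [hCS, hpe, hr]
  have h1 : nrmP p = Real.sqrt D := rfl
  rw [h1]
  calc Real.sqrt D ≤ Real.sqrt (sigmaMaxP A η * Pquad A η u) := Real.sqrt_le_sqrt hcore
  _ = Real.sqrt (sigmaMaxP A η) * Pnorm A η u := by
      rw [Real.sqrt_mul hσ.le]; rfl

end Sigma

/-- linear convergence of restarted Halpern PDHG: under the adaptive
restart condition, `η < 1/‖A‖₂` and `α`-metric sub-regularity on a region containing
all iterates, for every `n ≥ 0`,
`dist₂(zⁿ⁺¹'⁰, Z*) ≤ (1/e)ⁿ⁺¹·(2e·σ_max(P)/((τ⁰+1)·α))·dist₂(z⁰'⁰, Z*)`. -/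
theorem stmt15 {n m : ℕ} (A : Matrix (Fin m) (Fin n) ℝ) (b : Fin m → ℝ) (c : Fin n → ℝ)
    (η : ℝ) (hη0 : 0 < η) (hη : η < 1 / specNorm A)
    (hZ : (saddleSet A b c).Nonempty)
    (z : ℕ → ℕ → (Fin n → ℝ) × (Fin m → ℝ)) (τ : ℕ → ℕ)
    (hinner : ∀ N k : ℕ, z N (k + 1) =
      (((k : ℝ) + 1) / ((k : ℝ) + 2)) • pdhgStep A b c η (z N k)
        + (1 / ((k : ℝ) + 2)) • z N 0)
    (hrestart : ∀ N : ℕ, z (N + 1) 0 = pdhgStep A b c η (z N (τ N)))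
    (hτ : ∀ N : ℕ, 1 ≤ N →
      Pnorm A η (z N (τ N) - pdhgStep A b c η (z N (τ N))) ≤
        (1 / Real.exp 1) * Pnorm A η (z N 0 - pdhgStep A b c η (z N 0)) ∧
      ∀ k : ℕ, k < τ N →
        ¬ (Pnorm A η (z N k - pdhgStep A b c η (z N k)) ≤
            (1 / Real.exp 1) * Pnorm A η (z N 0 - pdhgStep A b c η (z N 0))))
    (α : ℝ) (hα : 0 < α)
    (hsub : ∀ N k : ℕ, α * dist2 (z N k) (saddleSet A b c) ≤ distF A b c (z N k)) :
    ∀ N : ℕ,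
      dist2 (z (N + 1) 0) (saddleSet A b c) ≤
        (1 / Real.exp 1) ^ (N + 1) *
          (2 * Real.exp 1 * sigmaMaxP A η / (((τ 0 : ℝ) + 1) * α)) *
            dist2 (z 0 0) (saddleSet A b c) := by
  intro N
  have hσ := sigma_pos A η hη0 hη
  have hexp : (0 : ℝ) < Real.exp 1 := Real.exp_pos 1
  have hτ1 : (0 : ℝ) < (τ 0 : ℝ) + 1 := by positivity
  set T := pdhgStep A b c η with hT
  set S := saddleSet A b c with hS
  -- the per-saddle-point bound
  have key : ∀ ws ∈ S, α * dist2 (z (N + 1) 0) S ≤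
      ((1 / Real.exp 1) ^ N * (2 * sigmaMaxP A η / ((τ 0 : ℝ) + 1))) * nrmP (z 0 0 - ws) := by
    intro ws hws
    have hfix : T ws = ws := saddle_fixed A b c η hη0 hws
    -- Halpern bound inside epoch 0
    have hhal := halpern_sq (pin A η) (pin_nonneg A η hη0 hη) (pin_add_left A η)
      (pin_smul_left A η) (pin_comm A η) T
      (fun u v => by
        rw [pin_self, pin_self]
        exact pdhg_nonexpansive_sq A b c η hη0 hη u v)
      (z 0) (hinner 0) ws hfix
    have hE0 : Pnorm A η (z 0 (τ 0) - T (z 0 (τ 0))) ≤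
        (2 / ((τ 0 : ℝ) + 1)) * Pnorm A η (z 0 0 - ws) := by
      have h := hhal (τ 0)
      rw [pin_self, pin_self] at h
      have hQe := Pquad_nonneg A η hη0 hη (z 0 (τ 0) - T (z 0 (τ 0)))
      have hQr := Pquad_nonneg A η hη0 hη (z 0 0 - ws)
      have he : Pnorm A η (z 0 (τ 0) - T (z 0 (τ 0))) ^ 2
          = Pquad A η (z 0 (τ 0) - T (z 0 (τ 0))) := Real.sq_sqrt hQe
      have hr : Pnorm A η (z 0 0 - ws) ^ 2 = Pquad A η (z 0 0 - ws) := Real.sq_sqrt hQr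
      have hpe : 0 ≤ Pnorm A η (z 0 (τ 0) - T (z 0 (τ 0))) := Real.sqrt_nonneg _
      have hpr : 0 ≤ Pnorm A η (z 0 0 - ws) := Real.sqrt_nonneg _
      have h2 : (((τ 0 : ℝ) + 1) * Pnorm A η (z 0 (τ 0) - T (z 0 (τ 0)))) ^ 2
          ≤ (2 * Pnorm A η (z 0 0 - ws)) ^ 2 := by
        rw [mul_pow, mul_pow, he, hr]
        norm_num
        exact h
      have h3 := Real.sqrt_le_sqrt h2
      rw [Real.sqrt_sq (by positivity), Real.sqrt_sq (by positivity)] at h3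
      rw [div_mul_eq_mul_div, le_div_iff₀ hτ1]
      linarith
    -- geometric decay across epochs
    have hchain : ∀ M : ℕ, Pnorm A η (z M (τ M) - T (z M (τ M))) ≤
        (1 / Real.exp 1) ^ M * ((2 / ((τ 0 : ℝ) + 1)) * Pnorm A η (z 0 0 - ws)) := by
      intro M
      induction M with
      | zero => simpa using hE0
      | succ M ih =>
        have h1 := (hτ (M + 1) (by omega)).1
        have h2 : Pnorm A η (z (M + 1) 0 - T (z (M + 1) 0)) ≤
            Pnorm A η (z M (τ M) - T (z M (τ M))) := by
          rw [hrestart M]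
          exact pdhg_nonexpansive A b c η hη0 hη (z M (τ M)) (T (z M (τ M)))
        have h3 : (0 : ℝ) ≤ 1 / Real.exp 1 := by positivity
        calc Pnorm A η (z (M + 1) (τ (M + 1)) - T (z (M + 1) (τ (M + 1))))
            ≤ (1 / Real.exp 1) * Pnorm A η (z (M + 1) 0 - T (z (M + 1) 0)) := h1
        _ ≤ (1 / Real.exp 1) * Pnorm A η (z M (τ M) - T (z M (τ M))) :=
            mul_le_mul_of_nonneg_left h2 h3
        _ ≤ (1 / Real.exp 1) * ((1 / Real.exp 1) ^ M *
              ((2 / ((τ 0 : ℝ) + 1)) * Pnorm A η (z 0 0 - ws))) :=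
            mul_le_mul_of_nonneg_left ih h3
        _ = (1 / Real.exp 1) ^ (M + 1) * ((2 / ((τ 0 : ℝ) + 1)) * Pnorm A η (z 0 0 - ws)) := by
            rw [pow_succ]; ring
    -- distance chain
    have h3 := hsub (N + 1) 0
    have h4 : distF A b c (z (N + 1) 0) ≤
        nrmP (Papply A η (z N (τ N) - T (z N (τ N)))) := by
      rw [hrestart N]
      apply csInf_le
      · refine ⟨0, ?_⟩
        rintro y ⟨u, -, rfl⟩
        exact nrmP_nonneg u
      · exact Set.mem_image_of_mem _ (pdhg_resolvent A b c η hη0 _)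
    have h5 := papply_le A η hη0 hη (z N (τ N) - T (z N (τ N)))
    have h6 := hchain N
    have h7 := Pnorm_le_sigma A η hη0 hη (z 0 0 - ws)
    have hsq : Real.sqrt (sigmaMaxP A η) * Real.sqrt (sigmaMaxP A η) = sigmaMaxP A η :=
      Real.mul_self_sqrt hσ.le
    have hsqnn : (0 : ℝ) ≤ Real.sqrt (sigmaMaxP A η) := Real.sqrt_nonneg _
    have hpow : (0 : ℝ) ≤ (1 / Real.exp 1) ^ N := by positivity
    calc α * dist2 (z (N + 1) 0) S ≤ distF A b c (z (N + 1) 0) := h3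
    _ ≤ nrmP (Papply A η (z N (τ N) - T (z N (τ N)))) := h4
    _ ≤ Real.sqrt (sigmaMaxP A η) * Pnorm A η (z N (τ N) - T (z N (τ N))) := h5
    _ ≤ Real.sqrt (sigmaMaxP A η) *
          ((1 / Real.exp 1) ^ N * ((2 / ((τ 0 : ℝ) + 1)) * Pnorm A η (z 0 0 - ws))) :=
        mul_le_mul_of_nonneg_left h6 hsqnn
    _ ≤ Real.sqrt (sigmaMaxP A η) *
          ((1 / Real.exp 1) ^ N * ((2 / ((τ 0 : ℝ) + 1)) *
            (Real.sqrt (sigmaMaxP A η) * nrmP (z 0 0 - ws)))) := by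
        apply mul_le_mul_of_nonneg_left _ hsqnn
        apply mul_le_mul_of_nonneg_left _ hpow
        apply mul_le_mul_of_nonneg_left h7 (by positivity)
    _ = (Real.sqrt (sigmaMaxP A η) * Real.sqrt (sigmaMaxP A η)) *
          ((1 / Real.exp 1) ^ N * ((2 / ((τ 0 : ℝ) + 1)) * nrmP (z 0 0 - ws))) := by ring
    _ = ((1 / Real.exp 1) ^ N * (2 * sigmaMaxP A η / ((τ 0 : ℝ) + 1))) * nrmP (z 0 0 - ws) := by
        rw [hsq]; ring
  -- take the infimum over saddle points
  set C := (1 / Real.exp 1) ^ N * (2 * sigmaMaxP A η / ((τ 0 : ℝ) + 1)) with hC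
  have hCpos : 0 < C := by rw [hC]; positivity
  have hinf : α * dist2 (z (N + 1) 0) S / C ≤ dist2 (z 0 0) S := by
    unfold dist2
    apply le_csInf (hZ.image _)
    rintro r ⟨ws, hws, rfl⟩
    rw [div_le_iff₀ hCpos]
    calc α * dist2 (z (N + 1) 0) S ≤ C * nrmP (z 0 0 - ws) := key ws hws
    _ = nrmP (z 0 0 - ws) * C := mul_comm _ _
  have hfinal : dist2 (z (N + 1) 0) S ≤ C / α * dist2 (z 0 0) S := by
    rw [div_le_iff₀ hCpos] at hinf
    rw [div_mul_eq_mul_div, le_div_iff₀ hα]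
    linarith
  have heq : (1 / Real.exp 1) ^ (N + 1) *
      (2 * Real.exp 1 * sigmaMaxP A η / (((τ 0 : ℝ) + 1) * α)) = C / α := by
    rw [hC, pow_succ]
    field_simp
  rw [heq]
  exact hfinal
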